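/- For u_n = a_n + b_n x with a_n = √(2 log n) - (log log n + log π)/(2√(2 log n)), b_n = 1/√(2 log n), and fixed x ∈ ℝ, one has [2Φ(u_n) - 1]^n → exp(-e^{-x}) as n → ∞. -/

import Mathlib

/-!
Write `T = 1 - Φ` for the Gaussian tail, so that `2Φ(u) - 1 = 1 - 2T(u)`; since `(1 + g_n)^n → e^t`
whenever `n g_n → t`, it suffices that `2n T(u_n) → e^{-x}`. Mills' ratio bounds
`φ(u) / (u (1 + u⁻²)) ≤ T(u) ≤ φ(u) / u` reduce this to `2n φ(u_n) / u_n → e^{-x}`.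
With `L = log n` and `c = 2x - log L - log π` one has `u_n = √(2L) + c / (2√(2L))`, hence
`u_n² = 2L + c + c² / (8L)` and exactly `2n φ(u_n) = e^{-x} √(2L) exp(-c² / (16L))`;
finally `u_n / √(2L) → 1` and `c² / L → 0` because `c = O(log L)`.
-/

open Real Filter Topology MeasureTheory

noncomputable def stdNormalPDF (u : ℝ) : ℝ :=
  (Real.sqrt (2 * Real.pi))⁻¹ * Real.exp (-(u ^ 2) / 2)

noncomputable def stdNormalCDF (u : ℝ) : ℝ :=
  ∫ t in Set.Iic u, stdNormalPDF t

noncomputable def aseq (n : ℕ) : ℝ :=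
  Real.sqrt (2 * Real.log n) -
    (Real.log (Real.log n) + Real.log Real.pi) / (2 * Real.sqrt (2 * Real.log n))

noncomputable def bseq (n : ℕ) : ℝ := 1 / Real.sqrt (2 * Real.log n)

open Set

lemma stdNormalPDF_eq_gaussianPDFReal : stdNormalPDF = ProbabilityTheory.gaussianPDFReal 0 1 := by
  ext u
  simp [stdNormalPDF, ProbabilityTheory.gaussianPDFReal]

lemma stdNormalPDF_pos (u : ℝ) : 0 < stdNormalPDF u := by
  unfold stdNormalPDF
  positivity

lemma integrable_stdNormalPDF : Integrable stdNormalPDF := by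
  rw [stdNormalPDF_eq_gaussianPDFReal]
  exact ProbabilityTheory.integrable_gaussianPDFReal 0 1

lemma integral_stdNormalPDF : ∫ u, stdNormalPDF u = 1 := by
  rw [stdNormalPDF_eq_gaussianPDFReal]
  exact ProbabilityTheory.integral_gaussianPDFReal_eq_one 0 one_ne_zero

lemma hasDerivAt_stdNormalPDF (t : ℝ) : HasDerivAt stdNormalPDF (-t * stdNormalPDF t) t := by
  have hexp : HasDerivAt (fun s : ℝ => -(s ^ 2) / 2) (-t) t :=
    ((hasDerivAt_pow 2 t).neg.div_const 2).congr_deriv (by ring)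
  unfold stdNormalPDF
  exact (hexp.exp.const_mul _).congr_deriv (by ring)

lemma tendsto_stdNormalPDF_atTop : Tendsto stdNormalPDF atTop (𝓝 0) := by
  have hexponent : Tendsto (fun s : ℝ => -(s ^ 2) / 2) atTop atBot :=
    (tendsto_neg_atTop_atBot.comp (tendsto_pow_atTop two_ne_zero)).atBot_div_const two_pos
  rw [← mul_zero (√(2 * π))⁻¹]
  exact (Real.tendsto_exp_atBot.comp hexponent).const_mul _

noncomputable def stdNormalTail (u : ℝ) : ℝ := ∫ t in Ioi u, stdNormalPDF t

lemma stdNormalCDF_add_stdNormalTail (u : ℝ) : stdNormalCDF u + stdNormalTail u = 1 := by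
  rw [stdNormalCDF, stdNormalTail, ← integral_stdNormalPDF]
  exact intervalIntegral.integral_Iic_add_Ioi integrable_stdNormalPDF.integrableOn
    integrable_stdNormalPDF.integrableOn

/- Mills' ratio bounds: `-φ` and `-φ(t)/t` are antiderivatives of `t φ(t)` and
`(1 + t⁻²) φ(t)`, which on `(u, ∞)` dominate `u φ(t)` and are dominated by `(1 + u⁻²) φ(t)`. -/

lemma stdNormalTail_le_div {u : ℝ} (hu : 0 < u) : stdNormalTail u ≤ stdNormalPDF u / u := by
  have hderiv : ∀ t ∈ Ici u, HasDerivAt (fun s => -stdNormalPDF s) (t * stdNormalPDF t) t :=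
    fun t _ => (hasDerivAt_stdNormalPDF t).neg.congr_deriv (by ring)
  have hnonneg : ∀ t ∈ Ioi u, 0 ≤ t * stdNormalPDF t :=
    fun t ht => mul_nonneg (hu.trans ht).le (stdNormalPDF_pos t).le
  have hlim : Tendsto (fun s => -stdNormalPDF s) atTop (𝓝 0) := by
    simpa using tendsto_stdNormalPDF_atTop.neg
  have hint := integrableOn_Ioi_deriv_of_nonneg' hderiv hnonneg hlim
  calc stdNormalTail u ≤ ∫ t in Ioi u, t * stdNormalPDF t / u := by
        refine setIntegral_mono_on integrable_stdNormalPDF.integrableOn (hint.div_const u)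
          measurableSet_Ioi fun t ht => ?_
        rw [le_div_iff₀ hu, mul_comm]
        exact mul_le_mul_of_nonneg_right ht.le (stdNormalPDF_pos t).le
    _ = stdNormalPDF u / u := by
        rw [integral_div, integral_Ioi_of_hasDerivAt_of_nonneg' hderiv hnonneg hlim]
        simp

lemma div_le_one_add_inv_sq_mul_stdNormalTail {u : ℝ} (hu : 0 < u) :
    stdNormalPDF u / u ≤ (1 + u⁻¹ ^ 2) * stdNormalTail u := by
  have hderiv : ∀ t ∈ Ici u, HasDerivAt (fun s => -stdNormalPDF s / s)
      ((1 + t⁻¹ ^ 2) * stdNormalPDF t) t := by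
    intro t ht
    have ht0 : t ≠ 0 := (hu.trans_le ht).ne'
    refine ((hasDerivAt_stdNormalPDF t).neg.div (hasDerivAt_id t) ht0).congr_deriv ?_
    simp only [Pi.neg_apply, id]
    field_simp
    ring
  have hnonneg : ∀ t ∈ Ioi u, 0 ≤ (1 + t⁻¹ ^ 2) * stdNormalPDF t :=
    fun t _ => mul_nonneg (by positivity) (stdNormalPDF_pos t).le
  have hlim : Tendsto (fun s => -stdNormalPDF s / s) atTop (𝓝 0) := by
    simpa [div_eq_mul_inv] using tendsto_stdNormalPDF_atTop.neg.mul tendsto_inv_atTop_zero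
  have hint := integrableOn_Ioi_deriv_of_nonneg' hderiv hnonneg hlim
  calc stdNormalPDF u / u = ∫ t in Ioi u, (1 + t⁻¹ ^ 2) * stdNormalPDF t := by
        rw [integral_Ioi_of_hasDerivAt_of_nonneg' hderiv hnonneg hlim]
        ring
    _ ≤ ∫ t in Ioi u, (1 + u⁻¹ ^ 2) * stdNormalPDF t := by
        refine setIntegral_mono_on hint (integrable_stdNormalPDF.integrableOn.const_mul _)
          measurableSet_Ioi fun t ht => ?_
        have hinv : t⁻¹ ^ 2 ≤ u⁻¹ ^ 2 :=
          pow_le_pow_left₀ (inv_nonneg.2 (hu.trans ht).le) (inv_anti₀ hu ht.le) 2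
        gcongr
        exact (stdNormalPDF_pos t).le
    _ = (1 + u⁻¹ ^ 2) * stdNormalTail u := integral_const_mul _ _

lemma tendsto_mul_stdNormalTail_of_tendsto {α : Type*} {l : Filter α} {u w : α → ℝ} {c : ℝ}
    (hu : Tendsto u l atTop) (hw : ∀ᶠ a in l, 0 ≤ w a)
    (h : Tendsto (fun a => w a * (stdNormalPDF (u a) / u a)) l (𝓝 c)) :
    Tendsto (fun a => w a * stdNormalTail (u a)) l (𝓝 c) := by
  have hcorr : Tendsto (fun a => 1 + (u a)⁻¹ ^ 2) l (𝓝 1) := by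
    simpa using (hu.inv_tendsto_atTop.pow 2).const_add 1
  have hlower := h.div hcorr one_ne_zero
  rw [div_one] at hlower
  refine tendsto_of_tendsto_of_tendsto_of_le_of_le' hlower h ?_ ?_
  · filter_upwards [hu.eventually_gt_atTop 0, hw] with a ha hwa
    rw [Pi.div_apply, div_le_iff₀ (by positivity), mul_assoc, mul_comm (stdNormalTail _)]
    exact mul_le_mul_of_nonneg_left (div_le_one_add_inv_sq_mul_stdNormalTail ha) hwa
  · filter_upwards [hu.eventually_gt_atTop 0, hw] with a ha hwa
    exact mul_le_mul_of_nonneg_left (stdNormalTail_le_div ha) hwa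

noncomputable def gumbelCorrection (x L : ℝ) : ℝ := 2 * x - log L - log π

noncomputable def gumbelLevel (x L : ℝ) : ℝ :=
  √(2 * L) + gumbelCorrection x L / (2 * √(2 * L))

lemma aseq_add_bseq_mul (x : ℝ) (n : ℕ) : aseq n + bseq n * x = gumbelLevel x (log n) := by
  unfold aseq bseq gumbelLevel gumbelCorrection
  ring

lemma gumbelLevel_sq (x : ℝ) {L : ℝ} (hL : 0 < L) :
    gumbelLevel x L ^ 2 = 2 * L + gumbelCorrection x L + gumbelCorrection x L ^ 2 / (8 * L) := by
  have hs : √(2 * L) ^ 2 = 2 * L := Real.sq_sqrt (by positivity)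
  have hs0 : √(2 * L) ≠ 0 := by positivity
  unfold gumbelLevel
  field_simp
  rw [hs]
  ring

lemma two_mul_exp_mul_stdNormalPDF_gumbelLevel (x : ℝ) {L : ℝ} (hL : 0 < L) :
    2 * exp L * stdNormalPDF (gumbelLevel x L) =
      exp (-x) * √(2 * L) * exp (-(gumbelCorrection x L ^ 2 / (16 * L))) := by
  have hexponent : -gumbelLevel x L ^ 2 / 2 =
      -L + -x + (log L + log π) / 2 + -(gumbelCorrection x L ^ 2 / (16 * L)) := by
    rw [gumbelLevel_sq x hL, gumbelCorrection]
    field_simp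
    ring
  have hhalf : exp ((log L + log π) / 2) = √(π * L) := by
    rw [exp_half, exp_add, exp_log hL, exp_log pi_pos, mul_comm]
  have hsqrt : √(2 * π) * √(2 * L) = 2 * √(π * L) := by
    rw [← Real.sqrt_mul (by positivity), show 2 * π * (2 * L) = 2 ^ 2 * (π * L) by ring,
      Real.sqrt_mul (by positivity), Real.sqrt_sq zero_le_two]
  have h2pi : √(2 * π) ≠ 0 := by positivity
  unfold stdNormalPDF
  rw [hexponent, exp_add, exp_add, exp_add, hhalf, exp_neg L]
  field_simp
  linear_combination -hsqrt

lemma tendsto_gumbelCorrection_div_sqrt (x : ℝ) :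
    Tendsto (fun L => gumbelCorrection x L / √L) atTop (𝓝 0) := by
  have hconst : Tendsto (fun L => (2 * x - log π) / √L) atTop (𝓝 0) :=
    tendsto_const_nhds.div_atTop Real.tendsto_sqrt_atTop
  have hlog : Tendsto (fun L => log L / √L) atTop (𝓝 0) := by
    simpa only [Real.sqrt_eq_rpow] using
      (isLittleO_log_rpow_atTop one_half_pos).tendsto_div_nhds_zero
  simpa [gumbelCorrection, sub_div, sub_right_comm] using hconst.sub hlog

lemma tendsto_gumbelLevel_div_sqrt (x : ℝ) :
    Tendsto (fun L => gumbelLevel x L / √(2 * L)) atTop (𝓝 1) := by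
  have h := (((tendsto_gumbelCorrection_div_sqrt x).mul
    (tendsto_inv_atTop_zero.comp Real.tendsto_sqrt_atTop)).div_const 4).const_add 1
  rw [zero_mul, zero_div, add_zero] at h
  refine h.congr' ?_
  filter_upwards [eventually_gt_atTop 0] with L hL
  have hs : √(2 * L) ^ 2 = 2 * L := Real.sq_sqrt (by positivity)
  have hs' : √L ^ 2 = L := Real.sq_sqrt hL.le
  have : √(2 * L) ≠ 0 := by positivity
  have : √L ≠ 0 := by positivity
  simp only [Function.comp_apply, gumbelLevel]
  field_simp
  rw [hs, hs']
  ring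

lemma tendsto_gumbelLevel_atTop (x : ℝ) : Tendsto (gumbelLevel x) atTop atTop := by
  have hs : Tendsto (fun L : ℝ => √(2 * L)) atTop atTop :=
    Real.tendsto_sqrt_atTop.comp (tendsto_id.const_mul_atTop two_pos)
  refine (hs.atTop_mul_pos one_pos (tendsto_gumbelLevel_div_sqrt x)).congr' ?_
  filter_upwards [eventually_gt_atTop 0] with L hL
  exact mul_div_cancel₀ _ (by positivity)

lemma tendsto_two_mul_exp_mul_stdNormalPDF_gumbelLevel_div (x : ℝ) :
    Tendsto (fun L => 2 * exp L * (stdNormalPDF (gumbelLevel x L) / gumbelLevel x L)) atTop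
      (𝓝 (exp (-x))) := by
  have hratio : Tendsto (fun L => √(2 * L) / gumbelLevel x L) atTop (𝓝 1) := by
    simpa using (tendsto_gumbelLevel_div_sqrt x).inv₀ one_ne_zero
  have hcorr : Tendsto (fun L => exp (-(gumbelCorrection x L ^ 2 / (16 * L)))) atTop (𝓝 1) := by
    have h := ((tendsto_gumbelCorrection_div_sqrt x).pow 2).div_const 16
    rw [← exp_zero, ← neg_zero, ← zero_div 16, ← zero_pow two_ne_zero]
    refine (continuous_exp.tendsto _).comp (h.neg.congr' ?_)
    filter_upwards [eventually_gt_atTop 0] with L hL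
    rw [div_pow, Real.sq_sqrt hL.le, div_div, mul_comm L]
  have h := (hratio.const_mul (exp (-x))).mul hcorr
  rw [mul_one, mul_one] at h
  refine h.congr' ?_
  filter_upwards [eventually_gt_atTop 0] with L hL
  rw [← mul_div_assoc (2 * exp L), two_mul_exp_mul_stdNormalPDF_gumbelLevel x hL]
  ring

lemma tendsto_two_mul_exp_mul_stdNormalTail_gumbelLevel (x : ℝ) :
    Tendsto (fun L => 2 * exp L * stdNormalTail (gumbelLevel x L)) atTop (𝓝 (exp (-x))) :=
  tendsto_mul_stdNormalTail_of_tendsto (tendsto_gumbelLevel_atTop x)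
    (.of_forall fun L => by positivity) (tendsto_two_mul_exp_mul_stdNormalPDF_gumbelLevel_div x)

/-- With u_n = a_n + b_n x, [2Φ(u_n) - 1]^n → exp(-e^{-x}). -/
theorem gumbel_cdf_power_limit (x : ℝ) :
    Tendsto (fun n : ℕ => (2 * stdNormalCDF (aseq n + bseq n * x) - 1) ^ n) atTop
      (𝓝 (Real.exp (-Real.exp (-x)))) := by
  have htail : Tendsto (fun n : ℕ => (n : ℝ) * -(2 * stdNormalTail (aseq n + bseq n * x)))
      atTop (𝓝 (-exp (-x))) := by
    have h := (tendsto_two_mul_exp_mul_stdNormalTail_gumbelLevel x).comp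
      (Real.tendsto_log_atTop.comp tendsto_natCast_atTop_atTop)
    refine h.neg.congr' ?_
    filter_upwards [eventually_gt_atTop 0] with n hn
    simp only [Function.comp_apply, aseq_add_bseq_mul, exp_log (Nat.cast_pos.2 hn)]
    ring
  refine (Real.tendsto_one_add_pow_exp_of_tendsto htail).congr fun n => ?_
  rw [← stdNormalCDF_add_stdNormalTail (aseq n + bseq n * x)]
  ring
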